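/- arXiv:math/0010305 — 8 statements merged into one kernel-verified Lean document; each statement's English description precedes it below -/
import Mathlib

section
/- Let L be a first-order language and let M be a countable L-structure. If the group Aut(M) of automorphisms of M (the group of L-equivalences M ≃[L] M under composition) is isomorphic as a group to a free group FreeGroup ι for some index type ι, then Aut(M) is countable. In particular, the automorphism group of a countable structure cannot be an uncountable free group. -/
open FirstOrder

/-- The group of automorphisms of an `L`-structure `M`, i.e. the `L`-equivalences
`M ≃[L] M` under composition. -/
instance languageEquivGroup (L : FirstOrder.Language) (M : Type*) [L.Structure M] :
    Group (M ≃[L] M) where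
  mul f g := f.comp g
  one := FirstOrder.Language.Equiv.refl L M
  inv := FirstOrder.Language.Equiv.symm
  mul_assoc _ _ _ := rfl
  one_mul := FirstOrder.Language.Equiv.refl_comp
  mul_one := FirstOrder.Language.Equiv.comp_refl
  inv_mul_cancel := FirstOrder.Language.Equiv.symm_comp_self

/-!
Give `Aut(M)` the topology of pointwise convergence. A countable set of automorphisms is dense,
and its images in `FreeGroup ι` involve only countably many generators; if `ι` is uncountable,
the exponent sum `φ : Aut(M) → ℤ` of a generator outside them therefore takes the value `1` on
every pointwise stabiliser of a finite set. On the other hand `Aut(M)` is complete: choosing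
`g n` with `φ (g n) = 1` in small enough stabilisers, the nested products
`s n = g n * (g (n + 1) * (⋯)^3)^3` converge, so `s n = g n * s (n + 1)^3`. Then
`2 φ(s 0) + 1 = 3^n (2 φ(s n) + 1)` is a nonzero integer divisible by every power of `3`.
-/

open FirstOrder.Language Filter

theorem Int.not_forall_eq_one_add_three_mul (a : ℕ → ℤ) :
    ¬ ∀ n, a n = 1 + 3 * a (n + 1) := by
  intro h
  have key : ∀ n, 2 * a 0 + 1 = 3 ^ n * (2 * a n + 1) := by
    intro n
    induction n with
    | zero => ring
    | succ n ih => rw [ih, h n]; ring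
  set N := (2 * a 0 + 1).natAbs
  have hN : N < (3 ^ N : ℤ).natAbs := by
    simpa [Int.natAbs_pow] using Nat.lt_pow_self (n := N) (by norm_num : 1 < 3)
  have := Int.eq_zero_of_dvd_of_natAbs_lt_natAbs ⟨_, key N⟩ hN
  omega

theorem exists_seq_eq_of_forall_lt_eq {α : Type*} [Nonempty α] (c : (ℕ → α) → ℕ → α)
    (hc : ∀ g g' m, (∀ k < m, g k = g' k) → c g m = c g' m) :
    ∃ g : ℕ → α, ∀ m, g m = c g m := by
  let ind : (m : ℕ) → ((k : ℕ) → k < m → α) → α := fun m prev =>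
    c (fun k => if h : k < m then prev k h else Classical.arbitrary α) m
  refine ⟨fun m => Nat.strongRec ind m, fun m => ?_⟩
  exact (Nat.strongRec_eq ind m).trans (hc _ _ m fun k hk => dif_pos hk)

theorem Countable.exists_finset_seq_eventually_mem (α : Type*) [Countable α] :
    ∃ B : ℕ → Finset α, ∀ x, ∀ᶠ m in atTop, x ∈ B m := by
  obtain ⟨enc, henc⟩ := Countable.exists_injective_nat α
  refine ⟨fun m => (Finset.range m).preimage enc henc.injOn, fun x => ?_⟩
  filter_upwards [eventually_gt_atTop (enc x)] with m hm
  simpa using hm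

namespace FreeGroup

variable {ι : Type*}

theorem exists_finite_mem_closure (w : FreeGroup ι) :
    ∃ s : Set ι, s.Finite ∧ w ∈ Subgroup.closure (of '' s) := by
  induction w using FreeGroup.induction_on with
  | C1 => exact ⟨∅, Set.finite_empty, one_mem _⟩
  | of x => exact ⟨{x}, Set.finite_singleton x, Subgroup.subset_closure (by simp)⟩
  | inv_of x ih =>
    obtain ⟨s, hs, hx⟩ := ih
    exact ⟨s, hs, inv_mem hx⟩
  | mul x y hx hy =>
    obtain ⟨s, hs, hx⟩ := hx
    obtain ⟨t, ht, hy⟩ := hy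
    refine ⟨s ∪ t, hs.union ht, mul_mem ?_ ?_⟩
    · exact Subgroup.closure_mono (Set.image_mono Set.subset_union_left) hx
    · exact Subgroup.closure_mono (Set.image_mono Set.subset_union_right) hy

theorem exists_forall_lift_mulSingle_eq_one [Uncountable ι] [DecidableEq ι] {G : Type*}
    [Group G] {S : Set (FreeGroup ι)} (hS : S.Countable) (a : G) :
    ∃ j, ∀ w ∈ S, lift (Pi.mulSingle j a) w = 1 := by
  choose! t ht hwt using fun w (_ : w ∈ S) => exists_finite_mem_closure w
  have hc : (⋃ w ∈ S, t w).Countable := hS.biUnion fun w hw => (ht w hw).countable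
  obtain ⟨j, hj⟩ : ∃ j, j ∉ ⋃ w ∈ S, t w := by
    by_contra! h
    exact not_countable (Set.countable_univ_iff.1 (hc.mono fun j _ => h j))
  refine ⟨j, fun w hw => (Subgroup.closure_le (lift (Pi.mulSingle j a)).ker).2 ?_ (hwt w hw)⟩
  rintro _ ⟨i, hi, rfl⟩
  have hij : i ≠ j := by
    rintro rfl
    exact hj (Set.mem_biUnion hw hi)
  simp [Pi.mulSingle_eq_of_ne hij]

end FreeGroup

namespace FirstOrder.Language.Equiv

variable {L : Language} {M : Type*} [L.Structure M]

@[simp]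
theorem mul_apply (f g : M ≃[L] M) (x : M) : (f * g) x = f (g x) := rfl

@[simp]
theorem inv_apply_self (f : M ≃[L] M) (x : M) : f⁻¹ (f x) = x := f.symm_apply_apply x

@[simp]
theorem apply_inv_self (f : M ≃[L] M) (x : M) : f (f⁻¹ x) = x := f.apply_symm_apply x

theorem exists_countable_forall_exists_eqOn [Countable M] :
    ∃ S : Set (M ≃[L] M), S.Countable ∧
      ∀ (u : M ≃[L] M) (F : Finset M), ∃ v ∈ S, ∀ x ∈ F, v x = u x := by
  classical
  let Realizes (R : Finset (M × M)) (v : M ≃[L] M) : Prop := ∀ p ∈ R, v p.1 = p.2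
  refine ⟨Set.range fun R => Classical.epsilon (Realizes R), Set.countable_range _,
    fun u F => ?_⟩
  let R := F.image fun x => (x, u x)
  have hu : Realizes R u := fun p hp => by
    obtain ⟨x, -, rfl⟩ := Finset.mem_image.1 hp
    rfl
  have hR := Classical.epsilon_spec ⟨u, hu⟩
  exact ⟨_, Set.mem_range_self R, fun x hx => hR (x, u x) (Finset.mem_image_of_mem _ hx)⟩

section Limits

variable {α : Type*} {l : Filter α}

theorem exists_eventually_apply_eq_of_eventuallyConst [l.NeBot] {f : α → M ≃[L] M}
    (hf : ∀ x, EventuallyConst (fun d => f d x) l)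
    (hf' : ∀ x, EventuallyConst (fun d => (f d)⁻¹ x) l) :
    ∃ a : M ≃[L] M, ∀ x, ∀ᶠ d in l, f d x = a x := by
  have hlim : ∀ {g : α → M → M}, (∀ x, EventuallyConst (fun d => g d x) l) →
      ∃ a : M → M, ∀ x, ∀ᶠ d in l, g d x = a x := fun hg => by
    choose a ha using fun x =>
      have : Nonempty M := ⟨x⟩
      eventuallyConst_iff_exists_eventuallyEq.1 (hg x)
    exact ⟨a, ha⟩
  obtain ⟨a, ha⟩ := hlim hf
  obtain ⟨b, hb⟩ := hlim hf'
  have left_inv : Function.LeftInverse b a := fun x => by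
    obtain ⟨d, h1, h2⟩ := ((ha x).and (hb (a x))).exists
    rw [← h2, ← h1, inv_apply_self]
  have right_inv : Function.RightInverse b a := fun x => by
    obtain ⟨d, h1, h2⟩ := ((hb x).and (ha (b x))).exists
    rw [← h2, ← h1, apply_inv_self]
  refine ⟨{ toFun := a, invFun := b, left_inv, right_inv, map_fun' := ?_, map_rel' := ?_ }, ha⟩
  · intro n F xs
    obtain ⟨d, h1, h2⟩ :=
      ((ha (Structure.funMap F xs)).and (eventually_all.2 fun i => ha (xs i))).exists
    rw [← h1, map_fun]
    exact congrArg (Structure.funMap F) (funext h2)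
  · intro n r xs
    obtain ⟨d, h⟩ := (eventually_all.2 fun i => ha (xs i)).exists
    rw [show a ∘ xs = f d ∘ xs from funext fun i => (h i).symm, map_rel]

theorem eventually_pow_apply_eq {f : α → M ≃[L] M} {a : M ≃[L] M}
    (h : ∀ x, ∀ᶠ d in l, f d x = a x) (k : ℕ) (x : M) :
    ∀ᶠ d in l, (f d ^ k) x = (a ^ k) x := by
  induction k generalizing x with
  | zero => exact Eventually.of_forall fun d => rfl
  | succ k ih =>
    filter_upwards [h x, ih (a x)] with d h1 h2
    rw [pow_succ, pow_succ, mul_apply, mul_apply, h1, h2]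

end Limits

section Continuity

/-- The sets `{u | AgreeOn F u v}` form a neighbourhood basis of `v` in the topology of pointwise
convergence on `Aut(M)`. -/
def AgreeOn (F : Finset M) (u v : M ≃[L] M) : Prop :=
  ∀ x ∈ F, u x = v x ∧ u⁻¹ x = v⁻¹ x

theorem AgreeOn.mono {F G : Finset M} {u v : M ≃[L] M} (h : AgreeOn G u v) (hFG : F ⊆ G) :
    AgreeOn F u v :=
  fun x hx => h x (hFG hx)

theorem agreeOn_one_of_forall_apply_eq {F : Finset M} {u : M ≃[L] M} (h : ∀ x ∈ F, u x = x) :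
    AgreeOn F u 1 := fun x hx => by
  refine ⟨h x hx, ?_⟩
  conv_lhs => rw [← h x hx]
  exact inv_apply_self u x

def PointwiseContinuousAt (Φ : (M ≃[L] M) → M ≃[L] M) (v : M ≃[L] M) : Prop :=
  ∀ F' : Finset M, ∃ F : Finset M, ∀ u, AgreeOn F u v → AgreeOn F' (Φ u) (Φ v)

variable {Φ Ψ : (M ≃[L] M) → M ≃[L] M} {v : M ≃[L] M}

theorem pointwiseContinuousAt_id (v : M ≃[L] M) : PointwiseContinuousAt id v :=
  fun F' => ⟨F', fun _ h => h⟩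

theorem pointwiseContinuousAt_const (a v : M ≃[L] M) : PointwiseContinuousAt (fun _ => a) v :=
  fun _ => ⟨∅, fun _ _ _ _ => ⟨rfl, rfl⟩⟩

theorem PointwiseContinuousAt.mul (hΦ : PointwiseContinuousAt Φ v)
    (hΨ : PointwiseContinuousAt Ψ v) : PointwiseContinuousAt (fun u => Φ u * Ψ u) v := by
  classical
  intro F'
  obtain ⟨FΦ, hFΦ⟩ := hΦ (F' ∪ F'.image (Ψ v))
  obtain ⟨FΨ, hFΨ⟩ := hΨ (F' ∪ F'.image ⇑(Φ v)⁻¹)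
  refine ⟨FΦ ∪ FΨ, fun u hu x hx => ?_⟩
  have hΦu := hFΦ u (hu.mono Finset.subset_union_left)
  have hΨu := hFΨ u (hu.mono Finset.subset_union_right)
  constructor
  · rw [mul_apply, mul_apply, (hΨu x (by simp [hx])).1,
      (hΦu _ (Finset.mem_union_right _ (Finset.mem_image_of_mem _ hx))).1]
  · rw [mul_inv_rev, mul_inv_rev, mul_apply, mul_apply, (hΦu x (by simp [hx])).2,
      (hΨu _ (Finset.mem_union_right _ (Finset.mem_image_of_mem _ hx))).2]

theorem PointwiseContinuousAt.pow (hΦ : PointwiseContinuousAt Φ v) (k : ℕ) :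
    PointwiseContinuousAt (fun u => Φ u ^ k) v := by
  induction k with
  | zero => simpa only [pow_zero] using pointwiseContinuousAt_const 1 v
  | succ k ih => simpa only [pow_succ] using ih.mul hΦ

/-- Chosen from `Φ` alone rather than from a continuity proof, so that `stageSet g B m` below
depends only on the `g k` with `k < m`. -/
noncomputable def modulus (Φ : (M ≃[L] M) → M ≃[L] M) (F' : Finset M) : Finset M :=
  Classical.epsilon fun F => ∀ u, AgreeOn F u 1 → AgreeOn F' (Φ u) (Φ 1)

theorem PointwiseContinuousAt.agreeOn_of_agreeOn_modulus (hΦ : PointwiseContinuousAt Φ 1)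
    {F' : Finset M} {u : M ≃[L] M} (hu : AgreeOn (modulus Φ F') u 1) :
    AgreeOn F' (Φ u) (Φ 1) :=
  Classical.epsilon_spec (hΦ F') u hu

end Continuity

def nest (g : ℕ → M ≃[L] M) : ℕ → ℕ → (M ≃[L] M) → M ≃[L] M
  | _, 0, h => h
  | n, d + 1, h => g n * nest g (n + 1) d h ^ 3

theorem nest_succ (g : ℕ → M ≃[L] M) (n d : ℕ) (h : M ≃[L] M) :
    nest g n (d + 1) h = nest g n d (g (n + d) * h ^ 3) := by
  induction d generalizing n with
  | zero => rfl
  | succ d ih =>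
    change g n * nest g (n + 1) (d + 1) h ^ 3 = g n * nest g (n + 1) d _ ^ 3
    rw [ih, Nat.add_right_comm, Nat.add_assoc]

theorem nest_congr {g g' : ℕ → M ≃[L] M} {n d : ℕ}
    (h : ∀ k, n ≤ k → k < n + d → g k = g' k) : nest g n d = nest g' n d := by
  induction d generalizing n with
  | zero => rfl
  | succ d ih =>
    funext u
    change g n * nest g (n + 1) d u ^ 3 = g' n * nest g' (n + 1) d u ^ 3
    rw [h n le_rfl (by omega), ih fun k hk hk' => h k (by omega) (by omega)]

theorem pointwiseContinuousAt_nest (g : ℕ → M ≃[L] M) (n d : ℕ) (v : M ≃[L] M) :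
    PointwiseContinuousAt (nest g n d) v := by
  induction d generalizing n with
  | zero => exact pointwiseContinuousAt_id v
  | succ d ih => exact (pointwiseContinuousAt_const (g n) v).mul ((ih (n + 1)).pow 3)

theorem eq_mul_pow_of_tendsto_nest {g s : ℕ → M ≃[L] M}
    (hs : ∀ n x, ∀ᶠ d in atTop, nest g n d 1 x = s n x) (n : ℕ) :
    s n = g n * s (n + 1) ^ 3 := by
  ext x
  obtain ⟨d, h1, h2⟩ :=
    (((tendsto_add_atTop_nat 1).eventually (hs n x)).and
      (eventually_pow_apply_eq (hs (n + 1)) 3 x)).exists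
  rw [← h1, mul_apply, ← h2]
  rfl

open Classical in
noncomputable def stageSet (g : ℕ → M ≃[L] M) (B : ℕ → Finset M) (m : ℕ) : Finset M :=
  (Finset.range (m + 1)).biUnion fun n => modulus (nest g n (m - n)) (B m)

theorem stageSet_congr {g g' : ℕ → M ≃[L] M} (B : ℕ → Finset M) {m : ℕ}
    (h : ∀ k < m, g k = g' k) : stageSet g B m = stageSet g' B m := by
  classical
  refine Finset.biUnion_congr rfl fun n hn => ?_
  rw [nest_congr fun k _ hk => h k (by have := Finset.mem_range.1 hn; omega)]

theorem agreeOn_nest_succ {g : ℕ → M ≃[L] M} {B : ℕ → Finset M}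
    (hg : ∀ m, ∀ x ∈ stageSet g B m, g m x = x) (n d : ℕ) :
    AgreeOn (B (n + d)) (nest g n (d + 1) 1) (nest g n d 1) := by
  classical
  rw [nest_succ, one_pow, mul_one]
  refine (pointwiseContinuousAt_nest g n d 1).agreeOn_of_agreeOn_modulus ?_
  refine agreeOn_one_of_forall_apply_eq fun x hx => hg _ x ?_
  refine Finset.mem_biUnion.2 ⟨n, by simp, ?_⟩
  rwa [Nat.add_sub_cancel_left]

theorem exists_tendsto_nest {g : ℕ → M ≃[L] M} {B : ℕ → Finset M}
    (hB : ∀ x, ∀ᶠ m in atTop, x ∈ B m) (hg : ∀ m, ∀ x ∈ stageSet g B m, g m x = x)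
    (n : ℕ) :
    ∃ s : M ≃[L] M, ∀ x, ∀ᶠ d in atTop, nest g n d 1 x = s x := by
  have hB' : ∀ x, ∃ N, ∀ d ≥ N, x ∈ B (n + d) := fun x => by
    obtain ⟨N, hN⟩ := eventually_atTop.1 (hB x)
    exact ⟨N, fun d hd => hN _ (by omega)⟩
  refine exists_eventually_apply_eq_of_eventuallyConst (fun x => ?_) (fun x => ?_)
  · obtain ⟨N, hN⟩ := hB' x
    exact eventuallyConst_atTop_nat.2 ⟨N, fun d hd => (agreeOn_nest_succ hg n d x (hN d hd)).1⟩
  · obtain ⟨N, hN⟩ := hB' x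
    exact eventuallyConst_atTop_nat.2 ⟨N, fun d hd => (agreeOn_nest_succ hg n d x (hN d hd)).2⟩

theorem exists_finset_forall_map_ne_ofAdd_one [Countable M]
    (φ : (M ≃[L] M) →* Multiplicative ℤ) :
    ∃ F : Finset M, ∀ u : M ≃[L] M, (∀ x ∈ F, u x = x) →
      φ u ≠ Multiplicative.ofAdd 1 := by
  by_contra! hφ
  choose pick hpick_fix hpick_φ using hφ
  obtain ⟨B, hB⟩ := Countable.exists_finset_seq_eventually_mem M
  obtain ⟨g, hg⟩ := exists_seq_eq_of_forall_lt_eq (fun g m => pick (stageSet g B m))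
    fun g g' m h => by rw [stageSet_congr B h]
  have hg_fix : ∀ m, ∀ x ∈ stageSet g B m, g m x = x := fun m => hg m ▸ hpick_fix _
  choose s hs using exists_tendsto_nest hB hg_fix
  refine Int.not_forall_eq_one_add_three_mul (fun n => (φ (s n)).toAdd) fun n => ?_
  rw [eq_mul_pow_of_tendsto_nest hs n, map_mul, map_pow, hg n, hpick_φ, toAdd_mul, toAdd_pow,
    toAdd_ofAdd, nsmul_eq_mul, Nat.cast_ofNat]

theorem countable_of_surjective_freeGroup [Countable M] {ι : Type*}
    (ψ : (M ≃[L] M) →* FreeGroup ι) (hψ : Function.Surjective ψ) : Countable ι := by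
  classical
  by_contra hι
  have : Uncountable ι := not_countable_iff.1 hι
  obtain ⟨S, hS, hS_dense⟩ := exists_countable_forall_exists_eqOn (L := L) (M := M)
  let a := Multiplicative.ofAdd (1 : ℤ)
  obtain ⟨j, hj⟩ := FreeGroup.exists_forall_lift_mulSingle_eq_one (hS.image ψ) a
  obtain ⟨F, hF⟩ :=
    exists_finset_forall_map_ne_ofAdd_one ((FreeGroup.lift (Pi.mulSingle j a)).comp ψ)
  obtain ⟨u, hu⟩ := hψ (FreeGroup.of j)
  obtain ⟨v, hvS, hv⟩ := hS_dense u F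
  refine hF (v⁻¹ * u) (fun x hx => by rw [mul_apply, ← hv x hx, inv_apply_self]) ?_
  simp [a, hu, hj _ (Set.mem_image_of_mem ψ hvS)]

end FirstOrder.Language.Equiv

/-- The automorphism group of a countable structure cannot be an uncountable free group:
if `Aut(M)` is isomorphic as a group to a free group, then it is countable. -/
theorem aut_countable_of_free (L : FirstOrder.Language) (M : Type*) [L.Structure M]
    [Countable M] (ι : Type*) (e : (M ≃[L] M) ≃* FreeGroup ι) :
    Countable (M ≃[L] M) := by
  have : Countable ι :=
    Language.Equiv.countable_of_surjective_freeGroup e.toMonoidHom e.surjective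
  exact Countable.of_equiv _ e.symm.toEquiv
end

section
/- Let L be a first-order language and let M be a countable L-structure. If the group Aut(M) of automorphisms of M is isomorphic as a group to (the multiplicative version of) a free abelian group FreeAbelianGroup ι for some index type ι, then Aut(M) is countable. In particular, the automorphism group of a countable structure cannot be an uncountable free abelian group. -/
open FirstOrder

namespace AutFA

open FirstOrder FirstOrder.Language FirstOrder.Language.Structure

variable {L : FirstOrder.Language} {M : Type*} [L.Structure M]

theorem mul_apply (f g : M ≃[L] M) (m : M) : (f * g) m = f (g m) := rfl

theorem one_apply (m : M) : (1 : M ≃[L] M) m = m := rfl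

theorem inv_apply_apply (f : M ≃[L] M) (m : M) : f⁻¹ (f m) = m :=
  FirstOrder.Language.Equiv.symm_apply_apply f m

theorem apply_inv_apply (f : M ≃[L] M) (m : M) : f (f⁻¹ m) = m :=
  FirstOrder.Language.Equiv.apply_symm_apply f m

theorem fix_pow {g : M ≃[L] M} {m : M} (hg : g m = m) (k : ℕ) : (g ^ k) m = m := by
  induction k with
  | zero => rw [pow_zero]; rfl
  | succ k ih => rw [pow_succ, mul_apply, hg, ih]

theorem abs_add_lower (x t : ℤ) : |t| - |x| ≤ |x + t| := by
  have h := abs_sub_abs_le_abs_sub t (-x)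
  rw [abs_neg, sub_neg_eq_add] at h
  rw [add_comm x t]
  exact h

/-- Pointwise convergence of a sequence of automorphisms to an automorphism. -/
def Conv (x : ℕ → M ≃[L] M) (q : M ≃[L] M) : Prop :=
  ∀ m : M, ∃ N₀ : ℕ, ∀ N, N₀ ≤ N → x N m = q m

theorem Conv.congr' {x x' : ℕ → M ≃[L] M} {q : M ≃[L] M} (K : ℕ)
    (h : ∀ N, K ≤ N → x N = x' N) (hx : Conv x q) : Conv x' q := by
  intro m
  obtain ⟨N₀, hN₀⟩ := hx m
  refine ⟨max K N₀, fun N hN => ?_⟩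
  rw [← h N (le_trans (le_max_left _ _) hN)]
  exact hN₀ N (le_trans (le_max_right _ _) hN)

theorem Conv.unique {x : ℕ → M ≃[L] M} {q q' : M ≃[L] M}
    (h : Conv x q) (h' : Conv x q') : q = q' := by
  apply FirstOrder.Language.Equiv.coe_injective
  funext m
  obtain ⟨N₁, h1⟩ := h m
  obtain ⟨N₂, h2⟩ := h' m
  have e1 := h1 (max N₁ N₂) (le_max_left _ _)
  have e2 := h2 (max N₁ N₂) (le_max_right _ _)
  simp only [← e1, ← e2]

theorem Conv.mul {x x' : ℕ → M ≃[L] M} {q q' : M ≃[L] M}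
    (h : Conv x q) (h' : Conv x' q') : Conv (fun N => x N * x' N) (q * q') := by
  intro m
  obtain ⟨N₁, h1⟩ := h' m
  obtain ⟨N₂, h2⟩ := h (q' m)
  refine ⟨max N₁ N₂, fun N hN => ?_⟩
  rw [mul_apply, mul_apply, h1 N (le_trans (le_max_left _ _) hN),
    h2 N (le_trans (le_max_right _ _) hN)]

theorem Conv.const (g : M ≃[L] M) : Conv (fun _ => g) g :=
  fun _ => ⟨0, fun _ _ => rfl⟩

theorem Conv.pow {x : ℕ → M ≃[L] M} {q : M ≃[L] M} (h : Conv x q) (d : ℕ) :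
    Conv (fun N => x N ^ d) (q ^ d) := by
  induction d with
  | zero => simpa [pow_zero] using Conv.const (1 : M ≃[L] M)
  | succ d ih => simpa [pow_succ] using ih.mul h

/-- The basic limit lemma: a pointwise "Cauchy" sequence of automorphisms (with respect to
a fixed enumeration, in a commutative group of automorphisms) has a pointwise limit which
is again an automorphism. -/
theorem exists_limit (comm : ∀ f g : M ≃[L] M, f * g = g * f)
    (a : ℕ → M) (ha : Function.Surjective a) (x : ℕ → M ≃[L] M)
    (hx : ∀ N, ∃ s, x (N + 1) = x N * s ∧ ∀ j ≤ N, s (a j) = a j) :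
    ∃ q : M ≃[L] M, Conv x q := by
  classical
  -- stabilization for any sequence with the Cauchy property
  have stab : ∀ (y : ℕ → M ≃[L] M),
      (∀ N, ∃ s, y (N + 1) = y N * s ∧ ∀ j ≤ N, s (a j) = a j) →
      ∀ j N, j ≤ N → y N (a j) = y j (a j) := by
    intro y hy j N hjN
    induction N with
    | zero => interval_cases j; rfl
    | succ N ih =>
      rcases Nat.lt_succ_iff_lt_or_eq.mp (Nat.lt_succ_of_le hjN) with hj | rfl
      · have hj' : j ≤ N := Nat.lt_succ_iff.mp hj
        obtain ⟨s, hs, hfix⟩ := hy N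
        rw [hs, mul_apply, hfix j hj', ih hj']
      · rfl
  -- the inverse sequence has the same property
  have hxi : ∀ N, ∃ s, (x (N + 1))⁻¹ = (x N)⁻¹ * s ∧ ∀ j ≤ N, s (a j) = a j := by
    intro N
    obtain ⟨s, hs, hfix⟩ := hx N
    refine ⟨s⁻¹, ?_, fun j hj => ?_⟩
    · rw [hs, mul_inv_rev, comm]
    · conv_lhs => rw [← hfix j hj]
      exact inv_apply_apply s (a j)
  -- index function
  have hidx : ∀ m : M, ∃ j, a j = m := ha
  let idx : M → ℕ := fun m => (hidx m).choose
  have haidx : ∀ m, a (idx m) = m := fun m => (hidx m).choose_spec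
  -- limit functions
  let F : M → M := fun m => x (idx m) m
  let Fi : M → M := fun m => (x (idx m))⁻¹ m
  have hF : ∀ (m : M) (N : ℕ), idx m ≤ N → x N m = F m := by
    intro m N hN
    have h' := stab x hx (idx m) N hN
    rw [haidx m] at h'
    exact h'
  have hFi : ∀ (m : M) (N : ℕ), idx m ≤ N → (x N)⁻¹ m = Fi m := by
    intro m N hN
    have h' := stab (fun N => (x N)⁻¹) hxi (idx m) N hN
    rw [haidx m] at h'
    exact h'
  have hleft : ∀ m, Fi (F m) = m := by
    intro m
    set N := max (idx m) (idx (F m)) with hN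
    have h1 : x N m = F m := hF m N (le_max_left _ _)
    have h2 : (x N)⁻¹ (F m) = Fi (F m) := hFi (F m) N (le_max_right _ _)
    rw [← h2, ← h1]
    exact inv_apply_apply (x N) m
  have hright : ∀ m, F (Fi m) = m := by
    intro m
    set N := max (idx m) (idx (Fi m)) with hN
    have h1 : (x N)⁻¹ m = Fi m := hFi m N (le_max_left _ _)
    have h2 : x N (Fi m) = F (Fi m) := hF (Fi m) N (le_max_right _ _)
    rw [← h2, ← h1]
    exact apply_inv_apply (x N) m
  refine ⟨⟨⟨F, Fi, hleft, hright⟩, ?_, ?_⟩, ?_⟩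
  · -- map_fun'
    intro n f xs
    classical
    obtain ⟨N, hN1, hN2⟩ : ∃ N, idx (funMap f xs) ≤ N ∧ ∀ k, idx (xs k) ≤ N :=
      ⟨max (idx (funMap f xs)) (Finset.univ.sup fun k => idx (xs k)), le_max_left _ _,
        fun k => le_trans (Finset.le_sup (f := fun k => idx (xs k)) (Finset.mem_univ k)) (le_max_right _ _)⟩
    have h0 : x N (funMap f xs) = F (funMap f xs) := hF _ _ hN1
    have h1 : ∀ k, x N (xs k) = F (xs k) := fun k => hF _ _ (hN2 k)
    show F (funMap f xs) = funMap f (F ∘ xs)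
    rw [← h0, FirstOrder.Language.Equiv.map_fun]
    congr 1
    funext k
    exact h1 k
  · -- map_rel'
    intro n r xs
    classical
    obtain ⟨N, hN2⟩ : ∃ N, ∀ k, idx (xs k) ≤ N :=
      ⟨Finset.univ.sup fun k => idx (xs k), fun k => Finset.le_sup (f := fun k => idx (xs k)) (Finset.mem_univ k)⟩
    have h1 : ∀ k, x N (xs k) = F (xs k) := fun k => hF _ _ (hN2 k)
    have hcomp : (F ∘ xs) = fun k => x N (xs k) := by
      funext k; exact (h1 k).symm
    show RelMap r (F ∘ xs) ↔ RelMap r xs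
    rw [hcomp]
    exact FirstOrder.Language.Equiv.map_rel (x N) r xs
  · -- convergence
    intro m
    exact ⟨idx m, fun N hN => hF m N hN⟩

/-- Partial products `h m ^ c m * h (m+1) ^ c (m+1) * ⋯` of length `k` starting at `m`. -/
def iterProd (h : ℕ → M ≃[L] M) (c : ℕ → ℕ) : ℕ → ℕ → M ≃[L] M
  | _, 0 => 1
  | m, (k + 1) => h m ^ c m * iterProd h c (m + 1) k

theorem iterProd_zero (h : ℕ → M ≃[L] M) (c : ℕ → ℕ) (m : ℕ) :
    iterProd h c m 0 = 1 := rfl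

theorem iterProd_succ (h : ℕ → M ≃[L] M) (c : ℕ → ℕ) (m k : ℕ) :
    iterProd h c m (k + 1) = h m ^ c m * iterProd h c (m + 1) k := rfl

theorem iterProd_succ_back (h : ℕ → M ≃[L] M) (c : ℕ → ℕ) (m k : ℕ) :
    iterProd h c m (k + 1) = iterProd h c m k * h (m + k) ^ c (m + k) := by
  induction k generalizing m with
  | zero => simp [iterProd_succ, iterProd_zero]
  | succ k ih =>
    rw [iterProd_succ, ih (m + 1), iterProd_succ, mul_assoc]
    have : m + 1 + k = m + (k + 1) := by omega
    rw [this]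

theorem iterProd_pow (comm : ∀ f g : M ≃[L] M, f * g = g * f)
    (h : ℕ → M ≃[L] M) {c c' : ℕ → ℕ} {m₀ : ℕ} (d : ℕ)
    (hc : ∀ n, m₀ ≤ n → c n = d * c' n) :
    ∀ k m, m₀ ≤ m → iterProd h c m k = iterProd h c' m k ^ d := by
  intro k
  induction k with
  | zero => intro m _; simp [iterProd_zero]
  | succ k ih =>
    intro m hm
    rw [iterProd_succ, iterProd_succ, (Commute.mul_pow (comm _ _) d),
      ih (m + 1) (le_trans hm (Nat.le_succ m)), ← pow_mul, hc m hm, Nat.mul_comm]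

theorem iterProd_step (h : ℕ → M ≃[L] M) (c : ℕ → ℕ) (a : ℕ → M)
    (hfix : ∀ n, ∀ j ≤ n, h n (a j) = a j) (m₀ N : ℕ) :
    ∃ s, iterProd h c m₀ ((N + 1) - m₀) = iterProd h c m₀ (N - m₀) * s ∧
      ∀ j ≤ N, s (a j) = a j := by
  rcases le_or_gt m₀ N with hm | hm
  · refine ⟨h N ^ c N, ?_, fun j hj => fix_pow (hfix N j hj) (c N)⟩
    have h1 : (N + 1) - m₀ = (N - m₀) + 1 := by omega
    have h2 : m₀ + (N - m₀) = N := by omega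
    rw [h1, iterProd_succ_back, h2]
  · have h1 : (N + 1) - m₀ = 0 := by omega
    have h2 : N - m₀ = 0 := by omega
    exact ⟨1, by rw [h1, h2, mul_one], fun j _ => rfl⟩

end AutFA

/-- The automorphism group of a countable structure cannot be an uncountable free abelian
group: if `Aut(M)` is isomorphic as a group to (the multiplicative version of) a free
abelian group, then it is countable. -/
theorem aut_countable_of_freeAbelian (L : FirstOrder.Language) (M : Type*) [L.Structure M]
    [Countable M] (ι : Type*) (e : (M ≃[L] M) ≃* Multiplicative (FreeAbelianGroup ι)) :
    Countable (M ≃[L] M) := by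
  classical
  have comm : ∀ f g : M ≃[L] M, f * g = g * f := by
    intro f g
    apply e.injective
    rw [map_mul, map_mul, mul_comm]
  by_cases hF : ∃ F : Finset M, ∀ g : M ≃[L] M, (∀ m ∈ F, g m = m) → g = 1
  · obtain ⟨F, hFtriv⟩ := hF
    have hinj : Function.Injective (fun (g : M ≃[L] M) (m : F) => g (m : M)) := by
      intro g g' hgg'
      have h1 : g⁻¹ * g' = 1 := by
        apply hFtriv
        intro m hm
        have h2 : g (⟨m, hm⟩ : F) = g' (⟨m, hm⟩ : F) := congrFun hgg' ⟨m, hm⟩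
        rw [AutFA.mul_apply, ← h2]
        exact AutFA.inv_apply_apply g m
      exact (inv_mul_eq_one.mp h1)
    exact hinj.countable
  · push_neg at hF
    exfalso
    have hne : Nonempty M := by
      by_contra hMe
      obtain ⟨g, -, hg1⟩ := hF ∅
      exact hg1 (FirstOrder.Language.Equiv.coe_injective
        (funext fun m => absurd ⟨m⟩ hMe))
    obtain ⟨a, ha⟩ := exists_surjective_nat M
    have hchoice : ∀ n : ℕ, ∃ g : M ≃[L] M, (∀ j ≤ n, g (a j) = a j) ∧ g ≠ 1 := by
      intro n
      obtain ⟨g, hfix, hg1⟩ := hF ((Finset.range (n + 1)).image a)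
      exact ⟨g, fun j hj => hfix _ (Finset.mem_image_of_mem a
        (Finset.mem_range.mpr (Nat.lt_succ_of_le hj))), hg1⟩
    choose h hfix hne1 using hchoice
    -- the additive picture
    let η : (M ≃[L] M) → FreeAbelianGroup ι := fun g => Multiplicative.toAdd (e g)
    have ηmul : ∀ f g, η (f * g) = η f + η g := by
      intro f g; show Multiplicative.toAdd (e (f * g)) = _
      rw [map_mul]; rfl
    have ηpow : ∀ (g) (k : ℕ), η (g ^ k) = k • η g := by
      intro g k; show Multiplicative.toAdd (e (g ^ k)) = _
      rw [map_pow, toAdd_pow]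
    have ηne : ∀ g, g ≠ 1 → η g ≠ 0 := by
      intro g hg h0
      apply hg
      apply e.injective
      rw [map_one]
      have : Multiplicative.toAdd (e g) = Multiplicative.toAdd (1 : Multiplicative (FreeAbelianGroup ι)) := h0
      exact Multiplicative.toAdd.injective this
    let u : ℕ → FreeAbelianGroup ι := fun n => η (h n)
    have hu : ∀ n, u n ≠ 0 := fun n => ηne _ (hne1 n)
    -- choose a coordinate where u n is nonzero
    have hcoord : ∀ n, ∃ i : ι, FreeAbelianGroup.coeff i (u n) ≠ 0 := by
      intro n
      by_contra hno
      push_neg at hno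
      apply hu n
      have h1 : FreeAbelianGroup.toFinsupp (u n) = 0 := Finsupp.ext fun i => hno i
      have h2 := Finsupp.toFreeAbelianGroup_toFinsupp (u n)
      rw [h1] at h2
      rw [← h2, map_zero]
    choose gi hgi using hcoord
    -- the recursion for the exponents
    let κ : ℕ → FreeAbelianGroup ι → ℤ := fun n y => FreeAbelianGroup.coeff (gi n) y
    let step : ℕ → (ℕ × FreeAbelianGroup ι) → (ℕ × FreeAbelianGroup ι) := fun N p =>
      ((max p.1 (max ((κ N (p.2 + 2 ^ p.1 • u N)).natAbs + N)
        ((N + 1) + (κ (N + 1) (p.2 + 2 ^ p.1 • u N)).natAbs))),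
        p.2 + 2 ^ p.1 • u N)
    let s : ℕ → ℕ × FreeAbelianGroup ι := fun N =>
      Nat.rec (motive := fun _ => ℕ × FreeAbelianGroup ι) (1, 0) step N
    let b : ℕ → ℕ := fun N => (s N).1
    let z : ℕ → FreeAbelianGroup ι := fun N => (s N).2
    have hb0 : b 0 = 1 := rfl
    have hz0 : z 0 = 0 := rfl
    have hzs : ∀ N, z (N + 1) = z N + 2 ^ b N • u N := fun N => rfl
    have hbs : ∀ N, b (N + 1) = max (b N) (max ((κ N (z (N + 1))).natAbs + N)
        ((N + 1) + (κ (N + 1) (z (N + 1))).natAbs)) := fun N => rfl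
    have hbmono : Monotone b := monotone_nat_of_le_succ fun N => by
      rw [hbs]; exact le_max_left _ _
    -- κ is additive
    have κadd : ∀ (n : ℕ) (y y' : FreeAbelianGroup ι), κ n (y + y') = κ n y + κ n y' :=
      fun n y y' => map_add _ _ _
    have κsmul : ∀ (n k : ℕ) (y : FreeAbelianGroup ι), κ n ((k : ℕ) • y) = (k : ℤ) * κ n y := by
      intro n k y
      show FreeAbelianGroup.coeff (gi n) (k • y) = _
      rw [map_nsmul, nsmul_eq_mul]
    have κzero : ∀ n : ℕ, κ n (0 : FreeAbelianGroup ι) = 0 := fun n => map_zero _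
    -- conditions C1 and C2
    have hpow : ∀ t : ℕ, (t : ℤ) < 2 ^ t := by
      intro t
      exact_mod_cast Nat.lt_two_pow_self (n := t)
    have C1 : ∀ N : ℕ, (N : ℤ) + |κ N (z N)| < 2 ^ b N := by
      intro N
      cases N with
      | zero =>
        rw [hz0, κzero, hb0]
        norm_num
      | succ N =>
        have h1 : (N + 1) + (κ (N + 1) (z (N + 1))).natAbs ≤ b (N + 1) := by
          rw [hbs]
          exact le_trans (le_max_right _ _) (le_max_right _ _)
        have h2 : (b (N + 1) : ℤ) < 2 ^ b (N + 1) := hpow _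
        have h3 : |κ (N + 1) (z (N + 1))| = ((κ (N + 1) (z (N + 1))).natAbs : ℤ) :=
          Int.abs_eq_natAbs _
        rw [h3]
        calc ((N + 1 : ℕ) : ℤ) + ((κ (N + 1) (z (N + 1))).natAbs : ℤ)
            ≤ (b (N + 1) : ℤ) := by exact_mod_cast h1
          _ < 2 ^ b (N + 1) := h2
    have C2 : ∀ N : ℕ, |κ N (z (N + 1))| + (N : ℤ) ≤ 2 ^ b (N + 1) := by
      intro N
      have h1 : (κ N (z (N + 1))).natAbs + N ≤ b (N + 1) := by
        rw [hbs]
        exact le_trans (le_max_left _ _) (le_max_right _ _)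
      have h2 : (b (N + 1) : ℤ) < 2 ^ b (N + 1) := hpow _
      have h3 : |κ N (z (N + 1))| = ((κ N (z (N + 1))).natAbs : ℤ) := Int.abs_eq_natAbs _
      rw [h3]
      calc ((κ N (z (N + 1))).natAbs : ℤ) + (N : ℤ)
          ≤ (b (N + 1) : ℤ) := by exact_mod_cast h1
        _ ≤ 2 ^ b (N + 1) := le_of_lt h2
    let c : ℕ → ℕ := fun n => 2 ^ b n
    -- the limits
    have hT : ∀ m₀ : ℕ, ∃ T : M ≃[L] M, AutFA.Conv (fun N => AutFA.iterProd h c m₀ (N - m₀)) T := by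
      intro m₀
      exact AutFA.exists_limit comm a ha _ (AutFA.iterProd_step h c a hfix m₀)
    choose T hTconv using hT
    -- recursion relation in the group
    have R1 : ∀ m₀, T m₀ = h m₀ ^ c m₀ * T (m₀ + 1) := by
      intro m₀
      have h2 : AutFA.Conv (fun N => h m₀ ^ c m₀ * AutFA.iterProd h c (m₀ + 1) (N - (m₀ + 1)))
          (h m₀ ^ c m₀ * T (m₀ + 1)) := (AutFA.Conv.const _).mul (hTconv (m₀ + 1))
      have h3 : AutFA.Conv (fun N => AutFA.iterProd h c m₀ (N - m₀))
          (h m₀ ^ c m₀ * T (m₀ + 1)) := by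
        apply h2.congr' (m₀ + 1)
        intro N hN
        have h4 : N - m₀ = (N - (m₀ + 1)) + 1 := by omega
        rw [h4, AutFA.iterProd_succ]
      exact (hTconv m₀).unique h3
    -- the additive elements
    let y : ℕ → FreeAbelianGroup ι := fun m₀ => η (T m₀)
    have yrec : ∀ m₀, y m₀ = c m₀ • u m₀ + y (m₀ + 1) := by
      intro m₀
      show η (T m₀) = _
      rw [R1 m₀, ηmul, ηpow]
    have tel : ∀ N, y 0 = z N + y N := by
      intro N
      induction N with
      | zero => rw [hz0, zero_add]
      | succ N ih =>
        rw [ih, yrec N, hzs N, ← add_assoc]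
    -- divisibility of tails
    have hdvd : ∀ m₀, ∃ w : FreeAbelianGroup ι, y m₀ = (2 ^ b m₀ : ℕ) • w := by
      intro m₀
      set c' : ℕ → ℕ := fun n => 2 ^ (b n - b m₀) with hc'def
      have hc : ∀ n, m₀ ≤ n → c n = 2 ^ b m₀ * c' n := by
        intro n hn
        show 2 ^ b n = 2 ^ b m₀ * 2 ^ (b n - b m₀)
        rw [← pow_add, Nat.add_sub_cancel' (hbmono hn)]
      obtain ⟨T', hT'⟩ := AutFA.exists_limit comm a ha
        (fun N => AutFA.iterProd h c' m₀ (N - m₀)) (AutFA.iterProd_step h c' a hfix m₀)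
      have h1 : AutFA.Conv (fun N => (AutFA.iterProd h c' m₀ (N - m₀)) ^ (2 ^ b m₀))
          (T' ^ 2 ^ b m₀) := hT'.pow _
      have h2 : AutFA.Conv (fun N => AutFA.iterProd h c m₀ (N - m₀)) (T' ^ 2 ^ b m₀) := by
        apply h1.congr' 0
        intro N _
        exact (AutFA.iterProd_pow comm h (2 ^ b m₀) hc (N - m₀) m₀ (le_refl m₀)).symm
      have h3 : T m₀ = T' ^ 2 ^ b m₀ := (hTconv m₀).unique h2
      exact ⟨η T', by show η (T m₀) = _; rw [h3, ηpow]⟩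
    -- the bound on coefficients of y 0
    have hbound : ∃ B : ℤ, ∀ i : ι, |FreeAbelianGroup.coeff i (y 0)| ≤ B := by
      refine ⟨(((y 0).support.sup fun i => (FreeAbelianGroup.coeff i (y 0)).natAbs : ℕ) : ℤ),
        fun i => ?_⟩
      by_cases hi : i ∈ (y 0).support
      · rw [Int.abs_eq_natAbs]
        exact_mod_cast Finset.le_sup (f := fun i => (FreeAbelianGroup.coeff i (y 0)).natAbs) hi
      · rw [(FreeAbelianGroup.notMem_support_iff i (y 0)).mp hi]
        simp
    obtain ⟨B, hB⟩ := hbound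
    -- main estimate: for every N, N ≤ B
    have key : ∀ N : ℕ, (N : ℤ) ≤ B := by
      intro N
      obtain ⟨w, hw⟩ := hdvd (N + 1)
      have hφ : κ N (y 0) = κ N (z (N + 1)) + (2 ^ b (N + 1) : ℤ) * κ N w := by
        rw [tel (N + 1), κadd, hw, κsmul]
        push_cast
        ring
      have hv : (N : ℤ) < |κ N (z (N + 1))| := by
        have e1 : κ N (z (N + 1)) = κ N (z N) + (2 ^ b N : ℤ) * κ N (u N) := by
          rw [hzs N, κadd, κsmul]
          push_cast
          ring
        have h1 : (1 : ℤ) ≤ |κ N (u N)| := Int.one_le_abs (hgi N)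
        have h2 : (2 ^ b N : ℤ) ≤ (2 ^ b N : ℤ) * |κ N (u N)| := by
          nlinarith [abs_nonneg (κ N (u N)), pow_pos (by norm_num : (0:ℤ) < 2) (b N)]
        have h3 : (2 ^ b N : ℤ) * |κ N (u N)| = |(2 ^ b N : ℤ) * κ N (u N)| := by
          rw [abs_mul, abs_of_pos (pow_pos (by norm_num : (0:ℤ) < 2) (b N))]
        have h4 : |(2 ^ b N : ℤ) * κ N (u N)| - |κ N (z N)| ≤ |κ N (z (N + 1))| := by
          rw [e1]
          exact AutFA.abs_add_lower _ _
        have hC1 := C1 N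
        linarith
      rcases eq_or_ne (κ N w) 0 with h0 | h0
      · have heq : κ N (y 0) = κ N (z (N + 1)) := by rw [hφ, h0, mul_zero, add_zero]
        have hb' : |κ N (y 0)| ≤ B := hB (gi N)
        rw [heq] at hb'
        linarith
      · have h1 : (1 : ℤ) ≤ |κ N w| := Int.one_le_abs h0
        have h2 : (2 ^ b (N + 1) : ℤ) ≤ (2 ^ b (N + 1) : ℤ) * |κ N w| := by
          nlinarith [pow_pos (by norm_num : (0:ℤ) < 2) (b (N + 1))]
        have h3 : (2 ^ b (N + 1) : ℤ) * |κ N w| = |(2 ^ b (N + 1) : ℤ) * κ N w| := by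
          rw [abs_mul, abs_of_pos (pow_pos (by norm_num : (0:ℤ) < 2) (b (N + 1)))]
        have h4 : |(2 ^ b (N + 1) : ℤ) * κ N w| - |κ N (z (N + 1))| ≤ |κ N (y 0)| := by
          rw [hφ]
          exact AutFA.abs_add_lower _ _
        have hC2 := C2 N
        have hb' : |κ N (y 0)| ≤ B := hB (gi N)
        linarith
    have hcontr := key (B.toNat + 1)
    have hB0 : 0 ≤ B := le_trans (abs_nonneg _) (hB (gi 0))
    omega
end

section
/- Let G be a subgroup of Equiv.Perm ℕ that is closed under pointwise convergence. Let d : ℕ → Equiv.Perm ℕ be a sequence with d(n) ∈ G and d(n) ≠ 1 for all n, converging pointwise to the identity (for every m there is N such that d(n)(m) = m for all n ≥ N). Then there exists a strictly increasing sequence j : ℕ → ℕ such that for every ν : ℕ → ℕ obeying j, there exists a sequence b : ℕ → Equiv.Perm ℕ with b(n) ∈ G and b(n) = d(n+1) * b(n+1)^(ν(n)) for all n. -/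
/-- A subgroup `G` of `Equiv.Perm ℕ` is closed under pointwise convergence if every
permutation `π` of `ℕ` such that for each `k` there exists `g ∈ G` agreeing with `π`
(and with `π⁻¹`) on all `i ≤ k` belongs to `G`. -/
def ClosedUnderPointwiseConvergence (G : Subgroup (Equiv.Perm ℕ)) : Prop :=
  ∀ π : Equiv.Perm ℕ,
    (∀ k : ℕ, ∃ g ∈ G, ∀ i ≤ k, g i = π i ∧ g⁻¹ i = π⁻¹ i) → π ∈ G

/-- `ν : ℕ → ℕ` obeys a strictly increasing `j : ℕ → ℕ` if for all `n*`, `m*` there are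
`i₀ < i₁` with `m* < i₀`, `n* < i₁`, such that `ν t = 0` whenever `j i₀ ≤ t ≤ j i₁` and
`∑_{i=n*}^{j i₀} (1 + ν i) < i₁ - i₀`.  (This corresponds to the sequence of group words
`w_n(x; y) = x · y ^ (ν n)`, the word `w_n` being trivial iff `ν n = 0`, with length
`1 + ν n`.) -/
def Obeys (ν : ℕ → ℕ) (j : ℕ → ℕ) : Prop :=
  ∀ nstar mstar : ℕ, ∃ i0 i1 : ℕ, mstar < i0 ∧ nstar < i1 ∧ i0 < i1 ∧
    (∀ t, j i0 ≤ t → t ≤ j i1 → ν t = 0) ∧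
    (∑ i ∈ Finset.Icc nstar (j i0), (1 + ν i)) < i1 - i0


private def wAux (d : ℕ → Equiv.Perm ℕ) (ν : ℕ → ℕ) : ℕ → ℕ → Equiv.Perm ℕ
  | 0, n => d (n + 1)
  | k + 1, n => d (n + 1) * (wAux d ν k (n + 1)) ^ (ν n)

private lemma wAux_mem (G : Subgroup (Equiv.Perm ℕ)) (d : ℕ → Equiv.Perm ℕ)
    (ν : ℕ → ℕ) (hdG : ∀ n, d n ∈ G) : ∀ k n, wAux d ν k n ∈ G
  | 0, _ => hdG _
  | k + 1, n => G.mul_mem (hdG _) (G.pow_mem (wAux_mem G d ν hdG k (n + 1)) _)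

/-- Shelah's Proposition 2(2) for the words `w_n(x; y) = x · y ^ (ν n)`: for any sequence
`d` of nonidentity elements of a pointwise-closed subgroup `G ≤ Equiv.Perm ℕ` converging
pointwise to the identity, there is a strictly increasing `j : ℕ → ℕ` such that for every
`ν` obeying `j` the system of equations `b n = d (n+1) * (b (n+1)) ^ (ν n)` has a
solution in `G`. -/
theorem exists_j_solvable (G : Subgroup (Equiv.Perm ℕ))
    (hG : ClosedUnderPointwiseConvergence G)
    (d : ℕ → Equiv.Perm ℕ) (hdG : ∀ n, d n ∈ G) (hd1 : ∀ n, d n ≠ 1)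
    (hconv : ∀ m : ℕ, ∃ N : ℕ, ∀ n ≥ N, d n m = m) :
    ∃ j : ℕ → ℕ, StrictMono j ∧ ∀ ν : ℕ → ℕ, Obeys ν j →
      ∃ b : ℕ → Equiv.Perm ℕ, (∀ n, b n ∈ G) ∧
        ∀ n, b n = d (n + 1) * (b (n + 1)) ^ (ν n) := by
  refine ⟨id, strictMono_id, ?_⟩
  intro ν hν
  have hz : ∀ n, ∃ k, ν (n + k) = 0 := by
    intro n
    obtain ⟨i0, i1, _, hni1, hi01, hzero, _⟩ := hν n 0
    exact ⟨i1 - n, by rw [Nat.add_sub_cancel' hni1.le]; exact hzero i1 hi01.le le_rfl⟩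
  set K : ℕ → ℕ := fun n => Nat.find (hz n) with hK
  refine ⟨fun n => wAux d ν (K n) n, fun n => wAux_mem G d ν hdG _ _, ?_⟩
  intro n
  show wAux d ν (K n) n = d (n + 1) * (wAux d ν (K (n + 1)) (n + 1)) ^ ν n
  by_cases h0 : ν n = 0
  · have hK0 : K n = 0 := by
      simp only [hK, Nat.find_eq_zero]
      simpa using h0
    rw [hK0, h0, pow_zero, mul_one]
    rfl
  · have hKn : K n = K (n + 1) + 1 := by
      have h1 : ν (n + K n) = 0 := Nat.find_spec (hz n)
      have hpos : 0 < K n := by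
        rcases Nat.eq_zero_or_pos (K n) with h | h
        · exact absurd (by simpa [h] using h1) h0
        · exact h
      have hle : K (n + 1) ≤ K n - 1 := by
        apply Nat.find_le
        have : n + 1 + (K n - 1) = n + K n := by omega
        rw [this]; exact h1
      have h2 : ν (n + 1 + K (n + 1)) = 0 := Nat.find_spec (hz (n + 1))
      have hge : K n ≤ K (n + 1) + 1 := by
        apply Nat.find_le
        have : n + (K (n + 1) + 1) = n + 1 + K (n + 1) := by omega
        rw [this]; exact h2
      omega
    rw [hKn]
    rfl
end

section
/- Let G be a subgroup of Equiv.Perm ℕ that is closed under pointwise convergence. Let d : ℕ → Equiv.Perm ℕ be a sequence with d(n) ∈ G and d(n) ≠ 1 for all n, converging pointwise to the identity (for every m there is N such that d(n)(m) = m for all n ≥ N). Then there exists a strictly increasing sequence j : ℕ → ℕ such that: for every sequence of group words w : ℕ → FreeGroup (ℕ ⊕ ℕ) obeying j, there exists a sequence b : ℕ → Equiv.Perm ℕ with b(n) ∈ G and, for all n, b(n) equals the evaluation of the word w(n) under the substitution sending the generator inl(i) to d(n+1+i) and the generator inr(i) to b(n+1+i) (via FreeGroup.lift). -/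
/-- A sequence of group words `w : ℕ → FreeGroup (ℕ ⊕ ℕ)` (with `Sum.inl i` playing the
role of `x_{i+1}` and `Sum.inr i` that of `y_{i+1}`) obeys a strictly increasing
`j : ℕ → ℕ` if for all `n*`, `m*` there are `i₀ < i₁` with `m* < i₀`, `n* < i₁`, such
that `w t` is the trivial word `x₁` whenever `j i₀ ≤ t ≤ j i₁`, and
`∑_{i=n*}^{j i₀} length (w i) < i₁ - i₀` where the length of a word is the length of its
reduced form (`FreeGroup.norm`). -/
def ObeysWords (w : ℕ → FreeGroup (ℕ ⊕ ℕ)) (j : ℕ → ℕ) : Prop :=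
  ∀ nstar mstar : ℕ, ∃ i0 i1 : ℕ, mstar < i0 ∧ nstar < i1 ∧ i0 < i1 ∧
    (∀ t, j i0 ≤ t → t ≤ j i1 → w t = FreeGroup.of (Sum.inl 0)) ∧
    (∑ i ∈ Finset.Icc nstar (j i0), (w i).norm) < i1 - i0

/-!
Choose levels `th 0 < th 1 < ⋯` such that each `d n` and its inverse map `[0, th ℓ]` into
`[0, th (ℓ + 1)]` (possible because `d n → 1` pointwise), and let `j` grow so fast that `d k`
fixes `[0, th (i + 2 ^ i)]` for `k > j i`. Truncating the system at `J`, i.e. putting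
`b r = d (r + 1)` (the value of the trivial word `x₁`) for `r ≥ J`, gives an explicit solution
in `G`, and a word of total length `S` climbs at most `2 ^ S` levels. If `w` is trivial on
`[j i₀, j i₁]` and the lengths up to `j i₀` sum to less than `i₁ - i₀`, the truncations at
`j i₀` and at any later point agree on `[0, i₀]`: inside the window both are `d (r + 1)`, and
beyond it every letter fixes all points the computation can reach. Hence the truncated
solutions converge pointwise; the limit solves the system, and lies in `G` because `G` is
closed.
-/

open Equiv Filter Finset

namespace Equiv.Perm

variable {α ι : Type*}

def TendstoPointwise (l : Filter ι) (f : ι → Perm α) (π : Perm α) : Prop :=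
  ∀ a, ∀ᶠ s in l, f s a = π a ∧ (f s)⁻¹ a = π⁻¹ a

namespace TendstoPointwise

variable {l : Filter ι} {f g : ι → Perm α} {π σ : Perm α}

lemma const (π : Perm α) : TendstoPointwise l (fun _ => π) π :=
  fun _ => .of_forall fun _ => ⟨rfl, rfl⟩

lemma inv (hf : TendstoPointwise l f π) : TendstoPointwise l (fun s => (f s)⁻¹) π⁻¹ :=
  fun a => (hf a).mono fun _ h => by simpa only [inv_inv] using h.symm

lemma mul (hf : TendstoPointwise l f π) (hg : TendstoPointwise l g σ) :
    TendstoPointwise l (fun s => f s * g s) (π * σ) := fun a => by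
  filter_upwards [hg a, hf (σ a), hf a, hg (π⁻¹ a)] with s hg₁ hf₁ hf₂ hg₂
  simp only [mul_inv_rev, mul_apply]
  rw [hg₁.1, hf₁.1, hf₂.2, hg₂.2]
  exact ⟨rfl, rfl⟩

lemma freeGroupLift {β : Type*} {φ : ι → β → Perm α} {ψ : β → Perm α}
    (h : ∀ b, TendstoPointwise l (fun s => φ s b) (ψ b)) (x : FreeGroup β) :
    TendstoPointwise l (fun s => FreeGroup.lift (φ s) x) (FreeGroup.lift ψ x) := by
  induction x using FreeGroup.induction_on with
  | C1 => simpa only [map_one] using const 1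
  | of b => simpa only [FreeGroup.lift_apply_of] using h b
  | inv_of b hb => simpa only [map_inv] using hb.inv
  | mul x y hx hy => simpa only [map_mul] using hx.mul hy

lemma congr' (hfg : ∀ᶠ s in l, f s = g s) (hf : TendstoPointwise l f π) :
    TendstoPointwise l g π := fun a => by
  filter_upwards [hfg, hf a] with s hs h
  rwa [← hs]

lemma unique [l.NeBot] (hπ : TendstoPointwise l f π) (hσ : TendstoPointwise l f σ) : π = σ :=
  Equiv.ext fun a => by
    obtain ⟨s, h₁, h₂⟩ := ((hπ a).and (hσ a)).exists
    rw [← h₁.1, h₂.1]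

end TendstoPointwise

lemma exists_tendstoPointwise {l : Filter ι} [l.NeBot] {f : ι → Perm α}
    (h : ∀ a, ∃ b c, ∀ᶠ s in l, f s a = b ∧ (f s)⁻¹ a = c) : ∃ π, TendstoPointwise l f π := by
  choose g g' hg using h
  refine ⟨⟨g, g', fun a => ?_, fun a => ?_⟩, hg⟩
  · obtain ⟨s, h₁, h₂⟩ := ((hg a).and (hg (g a))).exists
    rw [← h₂.2, ← h₁.1, inv_eq_iff_eq]
  · obtain ⟨s, h₁, h₂⟩ := ((hg a).and (hg (g' a))).exists
    rw [← h₂.1, ← h₁.2]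
    exact (f s).apply_symm_apply a

lemma apply_eq_self_of_mem_fixingSubgroup {s : Set α} {g : Perm α}
    (hg : g ∈ fixingSubgroup (Perm α) s) {a : α} (ha : a ∈ s) : g a = a :=
  (mem_fixingSubgroup_iff _).1 hg a ha

end Equiv.Perm

open Equiv.Perm

lemma ClosedUnderPointwiseConvergence.mem_of_tendstoPointwise {G : Subgroup (Perm ℕ)}
    (hG : ClosedUnderPointwiseConvergence G) {ι : Type*} {l : Filter ι} [l.NeBot]
    {f : ι → Perm ℕ} {π : Perm ℕ} (hf : TendstoPointwise l f π) (hfG : ∀ s, f s ∈ G) :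
    π ∈ G := hG π fun k => by
  obtain ⟨s, hs⟩ := ((eventually_all_finset (Iic k)).2 fun i _ => hf i).exists
  exact ⟨f s, hfG s, fun i hi => hs i (mem_Iic.2 hi)⟩

lemma FreeGroup.lift_eq_prod_map_toWord {β G : Type*} [DecidableEq β] [Group G] (φ : β → G)
    (x : FreeGroup β) :
    FreeGroup.lift φ x = (x.toWord.map fun y => bif y.2 then φ y.1 else (φ y.1)⁻¹).prod := by
  conv_lhs => rw [← FreeGroup.mk_toWord (x := x)]
  exact FreeGroup.lift_mk

section Levels

variable (th : ℕ → ℕ)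

def MovesLevelsBy (c : ℕ) (g : Perm ℕ) : Prop :=
  ∀ ℓ, Set.MapsTo g (Set.Iic (th ℓ)) (Set.Iic (th (ℓ + c))) ∧
    Set.MapsTo ⇑g⁻¹ (Set.Iic (th ℓ)) (Set.Iic (th (ℓ + c)))

def EqOnLevels (Λ c : ℕ) (g g' : Perm ℕ) : Prop :=
  ∀ ℓ, ℓ + c ≤ Λ → Set.EqOn g g' (Set.Iic (th ℓ)) ∧ Set.EqOn ⇑g⁻¹ ⇑g'⁻¹ (Set.Iic (th ℓ))

variable {th} {Λ a b c : ℕ} {g g' h h' : Perm ℕ}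

namespace MovesLevelsBy

lemma one : MovesLevelsBy th 0 1 := fun _ => ⟨Set.mapsTo_id _, Set.mapsTo_id _⟩

lemma inv (hg : MovesLevelsBy th c g) : MovesLevelsBy th c g⁻¹ :=
  fun ℓ => by simpa only [inv_inv] using (hg ℓ).symm

lemma mul (hg : MovesLevelsBy th a g) (hh : MovesLevelsBy th b h) :
    MovesLevelsBy th (a + b) (g * h) := fun ℓ => by
  rw [mul_inv_rev, coe_mul, coe_mul]
  constructor
  · simpa only [add_assoc, add_comm b a] using (hg (ℓ + b)).1.comp (hh ℓ).1
  · simpa only [add_assoc] using (hh (ℓ + a)).2.comp (hg ℓ).2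

lemma mono (hth : Monotone th) (hg : MovesLevelsBy th a g) (hab : a ≤ b) :
    MovesLevelsBy th b g := fun ℓ =>
  have hsub : Set.Iic (th (ℓ + a)) ⊆ Set.Iic (th (ℓ + b)) :=
    Set.Iic_subset_Iic.2 (hth (by omega))
  ⟨(hg ℓ).1.mono_right hsub, (hg ℓ).2.mono_right hsub⟩

lemma list_prod_map {ι : Type*} {f : ι → Perm ℕ} (hf : ∀ i, MovesLevelsBy th c (f i)) :
    ∀ L : List ι, MovesLevelsBy th (L.length * c) (L.map f).prod
  | [] => by simpa only [List.map_nil, List.prod_nil, List.length_nil, zero_mul] using one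
  | i :: L => by
    rw [List.map_cons, List.prod_cons, List.length_cons, add_mul, one_mul, add_comm]
    exact (hf i).mul (list_prod_map hf L)

lemma freeGroupLift {β : Type*} [DecidableEq β] {φ : β → Perm ℕ}
    (hφ : ∀ x, MovesLevelsBy th c (φ x)) (x : FreeGroup β) :
    MovesLevelsBy th (x.norm * c) (FreeGroup.lift φ x) := by
  have hletter : ∀ y : β × Bool, MovesLevelsBy th c (bif y.2 then φ y.1 else (φ y.1)⁻¹) := by
    rintro ⟨y, _ | _⟩
    exacts [(hφ y).inv, hφ y]
  rw [FreeGroup.lift_eq_prod_map_toWord]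
  exact list_prod_map hletter x.toWord

end MovesLevelsBy

namespace EqOnLevels

lemma rfl : EqOnLevels th Λ c g g := fun _ _ => ⟨Set.eqOn_refl _ _, Set.eqOn_refl _ _⟩

lemma mono (hg : EqOnLevels th Λ a g g') (hab : a ≤ b) : EqOnLevels th Λ b g g' :=
  fun ℓ hℓ => hg ℓ (by omega)

lemma inv (hg : EqOnLevels th Λ c g g') : EqOnLevels th Λ c g⁻¹ g'⁻¹ :=
  fun ℓ hℓ => by simpa only [inv_inv] using (hg ℓ hℓ).symm

lemma mul (hgm : MovesLevelsBy th a g) (hhm : MovesLevelsBy th b h)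
    (hg : EqOnLevels th Λ a g g') (hh : EqOnLevels th Λ b h h') :
    EqOnLevels th Λ (a + b) (g * h) (g' * h') := fun ℓ hℓ => by
  refine ⟨fun p hp => ?_, fun p hp => ?_⟩
  · rw [mul_apply, mul_apply, ← (hh ℓ (by omega)).1 hp]
    exact (hg (ℓ + b) (by omega)).1 ((hhm ℓ).1 hp)
  · rw [mul_inv_rev, mul_inv_rev, mul_apply, mul_apply, ← (hg ℓ (by omega)).2 hp]
    exact (hh (ℓ + a) (by omega)).2 ((hgm ℓ).2 hp)

lemma list_prod_map {ι : Type*} {f f' : ι → Perm ℕ} (hfm : ∀ i, MovesLevelsBy th c (f i))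
    (hf : ∀ i, EqOnLevels th Λ c (f i) (f' i)) :
    ∀ L : List ι, EqOnLevels th Λ (L.length * c) (L.map f).prod (L.map f').prod
  | [] => rfl
  | i :: L => by
    simp only [List.map_cons, List.prod_cons, List.length_cons, add_mul, one_mul, add_comm _ c]
    exact (hf i).mul (hfm i) (MovesLevelsBy.list_prod_map hfm L) (list_prod_map hfm hf L)

lemma freeGroupLift {β : Type*} [DecidableEq β] {φ φ' : β → Perm ℕ}
    (hφm : ∀ x, MovesLevelsBy th c (φ x)) (hφ : ∀ x, EqOnLevels th Λ c (φ x) (φ' x))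
    (x : FreeGroup β) :
    EqOnLevels th Λ (x.norm * c) (FreeGroup.lift φ x) (FreeGroup.lift φ' x) := by
  have hletterm : ∀ y : β × Bool, MovesLevelsBy th c (bif y.2 then φ y.1 else (φ y.1)⁻¹) := by
    rintro ⟨y, _ | _⟩
    exacts [(hφm y).inv, hφm y]
  have hletter : ∀ y : β × Bool, EqOnLevels th Λ c (bif y.2 then φ y.1 else (φ y.1)⁻¹)
      (bif y.2 then φ' y.1 else (φ' y.1)⁻¹) := by
    rintro ⟨y, _ | _⟩
    exacts [(hφ y).inv, hφ y]
  rw [FreeGroup.lift_eq_prod_map_toWord, FreeGroup.lift_eq_prod_map_toWord]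
  exact list_prod_map hletterm hletter x.toWord

lemma of_mem_fixingSubgroup (hth : Monotone th)
    (hg : g ∈ fixingSubgroup (Perm ℕ) (Set.Iic (th Λ)))
    (hg' : g' ∈ fixingSubgroup (Perm ℕ) (Set.Iic (th Λ))) : EqOnLevels th Λ c g g' := by
  intro ℓ hℓ
  have hsub : Set.Iic (th ℓ) ⊆ Set.Iic (th Λ) := Set.Iic_subset_Iic.2 (hth (by omega))
  refine ⟨fun p hp => ?_, fun p hp => ?_⟩
  · rw [apply_eq_self_of_mem_fixingSubgroup hg (hsub hp),
      apply_eq_self_of_mem_fixingSubgroup hg' (hsub hp)]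
  · rw [apply_eq_self_of_mem_fixingSubgroup (inv_mem hg) (hsub hp),
      apply_eq_self_of_mem_fixingSubgroup (inv_mem hg') (hsub hp)]

end EqOnLevels

end Levels

section ConvergenceToOne

variable {d : ℕ → Perm ℕ} (hconv : ∀ m, ∀ᶠ n in atTop, d n m = m)
include hconv

lemma eventually_mem_fixingSubgroup_Iic (q : ℕ) :
    ∀ᶠ n in atTop, d n ∈ fixingSubgroup (Perm ℕ) (Set.Iic q) := by
  filter_upwards [(eventually_all_finset (Iic q)).2 fun m _ => hconv m] with n hn
  exact (mem_fixingSubgroup_iff _).2 fun m hm => hn m (mem_Iic.2 hm)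

lemma exists_forall_apply_le (q : ℕ) : ∃ B, ∀ n, ∀ m ≤ q, d n m ≤ B ∧ (d n)⁻¹ m ≤ B := by
  obtain ⟨N, hN⟩ := eventually_atTop.1 (eventually_mem_fixingSubgroup_Iic hconv q)
  refine ⟨max q ((range N ×ˢ Iic q).sup fun x => max (d x.1 x.2) ((d x.1)⁻¹ x.2)),
    fun n m hm => ?_⟩
  rcases lt_or_ge n N with hn | hn
  · have := le_sup (f := fun x : ℕ × ℕ => max (d x.1 x.2) ((d x.1)⁻¹ x.2)) (b := (n, m))
      (mem_product.2 ⟨mem_range.2 hn, mem_Iic.2 hm⟩)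
    simp only at this
    omega
  · rw [apply_eq_self_of_mem_fixingSubgroup (hN n hn) (Set.mem_Iic.2 hm),
      apply_eq_self_of_mem_fixingSubgroup (inv_mem (hN n hn)) (Set.mem_Iic.2 hm)]
    omega

lemma exists_strictMono_movesLevelsBy_one :
    ∃ th : ℕ → ℕ, StrictMono th ∧ ∀ n, MovesLevelsBy th 1 (d n) := by
  choose B hB using exists_forall_apply_le hconv
  let th : ℕ → ℕ := fun ℓ => Nat.rec 0 (fun _ t => max (t + 1) (B t)) ℓ
  have th_succ : ∀ ℓ, th (ℓ + 1) = max (th ℓ + 1) (B (th ℓ)) := fun _ => Eq.refl _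
  have hstep : ∀ n ℓ, ∀ p ≤ th ℓ, d n p ≤ th (ℓ + 1) ∧ (d n)⁻¹ p ≤ th (ℓ + 1) :=
    fun n ℓ p hp => by
      have := hB _ n p hp
      rw [th_succ]
      omega
  exact ⟨th, strictMono_nat_of_lt_succ fun ℓ => by rw [th_succ]; omega,
    fun n ℓ => ⟨fun p hp => (hstep n ℓ p hp).1, fun p hp => (hstep n ℓ p hp).2⟩⟩

lemma exists_strictMono_forall_mem_fixingSubgroup (q : ℕ → ℕ) :
    ∃ j : ℕ → ℕ, StrictMono j ∧ ∀ i, ∀ k > j i, d k ∈ fixingSubgroup (Perm ℕ) (Set.Iic (q i)) :=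
  extraction_forall_of_eventually
    (P := fun i J => ∀ k > J, d k ∈ fixingSubgroup (Perm ℕ) (Set.Iic (q i))) fun i =>
      (eventually_forall_ge_atTop.2 (eventually_mem_fixingSubgroup_Iic hconv (q i))).mono
        fun _ h k hk => h k hk.le

end ConvergenceToOne

section TruncatedSystem

variable (d : ℕ → Perm ℕ) (w : ℕ → FreeGroup (ℕ ⊕ ℕ))

def truncatedSolution (J r : ℕ) : Perm ℕ :=
  if J ≤ r then d (r + 1)
  else FreeGroup.lift
    (Sum.elim (fun i => d (r + 1 + i)) (fun i => truncatedSolution J (r + 1 + i))) (w r)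
termination_by J - r

def truncationCost (J r : ℕ) : ℕ := 2 ^ ∑ i ∈ Icc r J, (w i).norm

variable {d w} {J r : ℕ}

lemma truncatedSolution_of_le (h : J ≤ r) : truncatedSolution d w J r = d (r + 1) := by
  rw [truncatedSolution, if_pos h]

lemma truncatedSolution_of_lt (h : r < J) :
    truncatedSolution d w J r = FreeGroup.lift
      (Sum.elim (fun i => d (r + 1 + i)) (fun i => truncatedSolution d w J (r + 1 + i))) (w r) := by
  rw [truncatedSolution, if_neg h.not_ge]

lemma truncatedSolution_mem {H : Subgroup (Perm ℕ)} {J r : ℕ} (hd : ∀ k > r, d k ∈ H) :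
    truncatedSolution d w J r ∈ H := by
  rcases le_or_gt J r with h | h
  · rw [truncatedSolution_of_le h]
    exact hd _ (by omega)
  · rw [truncatedSolution_of_lt h]
    refine FreeGroup.range_lift_le ?_ ⟨w r, rfl⟩
    rintro _ ⟨i | i, rfl⟩
    · exact hd _ (by omega)
    · exact truncatedSolution_mem (r := r + 1 + i) fun k hk => hd k (by omega)
termination_by J - r

lemma one_le_truncationCost : 1 ≤ truncationCost w J r := Nat.one_le_two_pow

lemma truncationCost_le_of_le {r' : ℕ} (h : r ≤ r') :
    truncationCost w J r' ≤ truncationCost w J r :=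
  Nat.pow_le_pow_right two_pos (sum_le_sum_of_subset (Icc_subset_Icc_left h))

lemma norm_mul_truncationCost_succ_le (h : r ≤ J) :
    (w r).norm * truncationCost w J (r + 1) ≤ truncationCost w J r := by
  rw [truncationCost, truncationCost, ← Order.succ_eq_add_one, Icc_succ_left_eq_Ioc,
    ← add_sum_Ioc_eq_sum_Icc h, pow_add]
  exact Nat.mul_le_mul_right _ Nat.lt_two_pow_self.le

variable {th : ℕ → ℕ} (hth : Monotone th) (hd : ∀ n, MovesLevelsBy th 1 (d n))
include hth hd

lemma movesLevelsBy_truncatedSolution {J r : ℕ} :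
    MovesLevelsBy th (truncationCost w J r) (truncatedSolution d w J r) := by
  rcases le_or_gt J r with h | h
  · rw [truncatedSolution_of_le h]
    exact (hd _).mono hth one_le_truncationCost
  · rw [truncatedSolution_of_lt h]
    refine (MovesLevelsBy.freeGroupLift (fun a => ?_) (w r)).mono hth
      (norm_mul_truncationCost_succ_le h.le)
    rcases a with i | i
    · exact (hd _).mono hth one_le_truncationCost
    · exact (movesLevelsBy_truncatedSolution (r := r + 1 + i)).mono hth
        (truncationCost_le_of_le (by omega))
termination_by J - r

lemma movesLevelsBy_truncatedSubst (a : ℕ ⊕ ℕ) :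
    MovesLevelsBy th (truncationCost w J (r + 1))
      (Sum.elim (fun i => d (r + 1 + i)) (fun i => truncatedSolution d w J (r + 1 + i)) a) := by
  rcases a with i | i
  · exact (hd _).mono hth one_le_truncationCost
  · exact (movesLevelsBy_truncatedSolution hth hd).mono hth (truncationCost_le_of_le (by omega))

lemma eqOnLevels_truncatedSolution {J J' J₁ Λ r : ℕ} (hJJ' : J ≤ J')
    (hwin : ∀ t, J ≤ t → t ≤ J₁ → w t = FreeGroup.of (Sum.inl 0))
    (hfix : ∀ k > J₁, d k ∈ fixingSubgroup (Perm ℕ) (Set.Iic (th Λ))) :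
    EqOnLevels th Λ (truncationCost w J r) (truncatedSolution d w J r)
      (truncatedSolution d w J' r) := by
  rcases le_or_gt J' r with h' | h'
  · rw [truncatedSolution_of_le h', truncatedSolution_of_le (hJJ'.trans h')]
    exact EqOnLevels.rfl
  rcases lt_or_ge r J with h | h
  · rw [truncatedSolution_of_lt h, truncatedSolution_of_lt h']
    refine (EqOnLevels.freeGroupLift (movesLevelsBy_truncatedSubst hth hd) (fun a => ?_)
      (w r)).mono (norm_mul_truncationCost_succ_le h.le)
    rcases a with i | i
    · exact EqOnLevels.rfl
    · exact (eqOnLevels_truncatedSolution (r := r + 1 + i) hJJ' hwin hfix).mono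
        (truncationCost_le_of_le (by omega))
  rw [truncatedSolution_of_le h]
  rcases le_or_gt r J₁ with hr | hr
  · rw [truncatedSolution_of_lt h', hwin r h hr, FreeGroup.lift_apply_of, Sum.elim_inl, add_zero]
    exact EqOnLevels.rfl
  · exact EqOnLevels.of_mem_fixingSubgroup hth (hfix _ (by omega))
      (truncatedSolution_mem fun k hk => hfix k (by omega))
termination_by J' - r

end TruncatedSystem

lemma exists_tendstoPointwise_truncatedSolution {d : ℕ → Perm ℕ} {w : ℕ → FreeGroup (ℕ ⊕ ℕ)}
    {th j : ℕ → ℕ} (hth : StrictMono th) (hd : ∀ n, MovesLevelsBy th 1 (d n)) (hj : StrictMono j)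
    (hjfix : ∀ i, ∀ k > j i, d k ∈ fixingSubgroup (Perm ℕ) (Set.Iic (th (i + 2 ^ i))))
    (hw : ObeysWords w j) :
    ∃ J : ℕ → ℕ, Tendsto J atTop atTop ∧
      ∀ n, ∃ b, TendstoPointwise atTop (fun s => truncatedSolution d w (J s) n) b := by
  choose i₀ i₁ hi₀ _ hi₀₁ hwin hsum using hw 0
  have hcost : ∀ s n, truncationCost w (j (i₀ s)) n ≤ 2 ^ i₁ s := fun s n =>
    (truncationCost_le_of_le n.zero_le).trans
      (Nat.pow_le_pow_right two_pos ((hsum s).le.trans (Nat.sub_le _ _)))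
  refine ⟨fun s => j (i₀ s), tendsto_atTop_mono (fun s => (hi₀ s).le.trans hj.le_apply)
    tendsto_id, fun n => exists_tendstoPointwise fun m => ⟨truncatedSolution d w (j (i₀ m)) n m,
      (truncatedSolution d w (j (i₀ m)) n)⁻¹ m, ?_⟩⟩
  filter_upwards [eventually_ge_atTop (i₀ m)] with s hs
  have hagree := eqOnLevels_truncatedSolution (r := n) hth.monotone hd
    (hj.monotone (hs.trans (hi₀ s).le)) (hwin m) (hjfix (i₁ m))
    m (by have := hcost m n; have := hi₀ m; have := hi₀₁ m; omega)
  exact ⟨(hagree.1 hth.le_apply).symm, (hagree.2 hth.le_apply).symm⟩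

theorem exists_j_solvable_words_general (G : Subgroup (Equiv.Perm ℕ))
    (hG : ClosedUnderPointwiseConvergence G)
    (d : ℕ → Equiv.Perm ℕ) (hdG : ∀ n, d n ∈ G)
    (hconv : ∀ m : ℕ, ∃ N : ℕ, ∀ n ≥ N, d n m = m) :
    ∃ j : ℕ → ℕ, StrictMono j ∧ ∀ w : ℕ → FreeGroup (ℕ ⊕ ℕ), ObeysWords w j →
      ∃ b : ℕ → Equiv.Perm ℕ, (∀ n, b n ∈ G) ∧
        ∀ n, b n = FreeGroup.lift
          (Sum.elim (fun i => d (n + 1 + i)) (fun i => b (n + 1 + i))) (w n) := by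
  have hconv' : ∀ m, ∀ᶠ n in atTop, d n m = m := fun m => eventually_atTop.2 (hconv m)
  obtain ⟨th, hth, hd⟩ := exists_strictMono_movesLevelsBy_one hconv'
  obtain ⟨j, hj, hjfix⟩ :=
    exists_strictMono_forall_mem_fixingSubgroup hconv' fun i => th (i + 2 ^ i)
  refine ⟨j, hj, fun w hw => ?_⟩
  obtain ⟨J, hJ, hlim⟩ := exists_tendstoPointwise_truncatedSolution hth hd hj hjfix hw
  choose b hb using hlim
  refine ⟨b, fun n => hG.mem_of_tendstoPointwise (hb n) fun s =>
    truncatedSolution_mem fun k _ => hdG k, fun n => (hb n).unique ?_⟩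
  have hunfold : ∀ᶠ s in atTop, FreeGroup.lift (Sum.elim (fun i => d (n + 1 + i))
      (fun i => truncatedSolution d w (J s) (n + 1 + i))) (w n) = truncatedSolution d w (J s) n :=
    (hJ.eventually_gt_atTop n).mono fun s hs => (truncatedSolution_of_lt hs).symm
  refine (TendstoPointwise.freeGroupLift (fun a => ?_) (w n)).congr' hunfold
  rcases a with i | i
  · exact .const _
  · exact hb _

/-- Shelah's Proposition 2(2): for any sequence `d` of nonidentity elements of a
pointwise-closed subgroup `G ≤ Equiv.Perm ℕ` converging pointwise to the identity, there
is a strictly increasing `j : ℕ → ℕ` such that for every sequence of group words `w`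
obeying `j`, the system of equations
`b n = w n (d (n+1), d (n+2), …; b (n+1), b (n+2), …)` has a solution in `G`. -/
theorem exists_j_solvable_words (G : Subgroup (Equiv.Perm ℕ))
    (hG : ClosedUnderPointwiseConvergence G)
    (d : ℕ → Equiv.Perm ℕ) (hdG : ∀ n, d n ∈ G) (hd1 : ∀ n, d n ≠ 1)
    (hconv : ∀ m : ℕ, ∃ N : ℕ, ∀ n ≥ N, d n m = m) :
    ∃ j : ℕ → ℕ, StrictMono j ∧ ∀ w : ℕ → FreeGroup (ℕ ⊕ ℕ), ObeysWords w j →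
      ∃ b : ℕ → Equiv.Perm ℕ, (∀ n, b n ∈ G) ∧
        ∀ n, b n = FreeGroup.lift
          (Sum.elim (fun i => d (n + 1 + i)) (fun i => b (n + 1 + i))) (w n) :=
  exists_j_solvable_words_general G hG d hdG hconv
end

section
/- Every nontrivial element of a free group fails to have a t-th root for some t > 1: for every type ι and every g ∈ FreeGroup ι with g ≠ 1, there exists a natural number t > 1 such that h^t ≠ g for all h ∈ FreeGroup ι. -/
/-!
Write the reduced word of `x ≠ 1` as `c k c⁻¹` with `k` nonempty and cyclically reduced. Then the
reduced word of `x ^ n` is `c kⁿ c⁻¹`, so the word length of `x ^ n` is at least `n`. Hence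
`g ≠ 1` has no root of order `|g| + 1`, where `|g|` is its word length.
-/

namespace FreeGroup

open List reduceCyclically

variable {α : Type*} [DecidableEq α]

theorem reduceCyclically_toWord_ne_nil {x : FreeGroup α} (hx : x ≠ 1) :
    reduceCyclically x.toWord ≠ [] := by
  intro hnil
  have hconj := conj_conjugator_reduceCyclically x.toWord
  rw [hnil, append_nil] at hconj
  apply hx
  rw [← mk_toWord (x := x), ← hconj, ← mul_mk, ← inv_mk, mul_inv_cancel]

theorem le_norm_pow {x : FreeGroup α} (hx : x ≠ 1) (n : ℕ) : n ≤ (x ^ n).norm := by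
  rcases eq_or_ne n 0 with rfl | hn
  · simp
  have hk : 1 ≤ (reduceCyclically x.toWord).length :=
    length_pos_iff.mpr (reduceCyclically_toWord_ne_nil hx)
  calc n ≤ n * (reduceCyclically x.toWord).length := Nat.le_mul_of_pos_right n hk
    _ ≤ (x ^ n).norm := by
      simp only [norm, toWord_pow, reduce_flatten_replicate isReduced_toWord, if_neg hn,
        length_append, length_flatten, map_replicate, sum_replicate, smul_eq_mul]
      omega

end FreeGroup

/-- Every nontrivial element of a free group fails to have a `t`-th root for some
`t > 1`. -/
theorem freeGroup_exists_no_root (ι : Type*) (g : FreeGroup ι) (hg : g ≠ 1) :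
    ∃ t : ℕ, 1 < t ∧ ∀ h : FreeGroup ι, h ^ t ≠ g := by
  classical
  have hnorm : 0 < g.norm := Nat.pos_of_ne_zero (mt FreeGroup.norm_eq_zero.mp hg)
  refine ⟨g.norm + 1, by omega, fun h hpow => ?_⟩
  have hh : h ≠ 1 := by
    rintro rfl
    exact hg (by simpa using hpow.symm)
  have := FreeGroup.le_norm_pow hh (g.norm + 1)
  rw [hpow] at this
  omega
end

section
/- In a free abelian group, every countable subset is contained in a countable retract: for every type ι and every countable set X ⊆ FreeAbelianGroup ι, there exist a countable subgroup (additive subgroup) H of FreeAbelianGroup ι with X ⊆ H and an additive group homomorphism r : FreeAbelianGroup ι →+ FreeAbelianGroup ι whose range is contained in H and which fixes every element of H (r(h) = h for all h ∈ H). -/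
open FreeAbelianGroup

/-- In a free abelian group, every countable subset is contained in a countable retract:
a countable additive subgroup `H` containing it, together with an additive homomorphism
of the free abelian group into itself whose range lies in `H` and which fixes `H`
pointwise. -/
theorem freeAbelianGroup_countable_retract (ι : Type*) (X : Set (FreeAbelianGroup ι))
    (hX : X.Countable) :
    ∃ H : AddSubgroup (FreeAbelianGroup ι), Countable H ∧
      X ⊆ (H : Set (FreeAbelianGroup ι)) ∧
      ∃ r : FreeAbelianGroup ι →+ FreeAbelianGroup ι,
        (∀ g : FreeAbelianGroup ι, r g ∈ H) ∧ ∀ h ∈ H, r h = h := by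
  classical
  set T : Set ι := ⋃ x ∈ X, ((FreeAbelianGroup.toFinsupp x).support : Set ι) with hT
  have hTc : T.Countable := hX.biUnion fun x _ => (Finset.countable_toSet _)
  set H : AddSubgroup (FreeAbelianGroup ι) :=
    { carrier := {g | ((FreeAbelianGroup.toFinsupp g).support : Set ι) ⊆ T}
      zero_mem' := by simp
      add_mem' := fun {a b} ha hb => by
        intro i hi
        rw [map_add] at hi
        rcases Finset.mem_union.1 (Finsupp.support_add hi) with h | h
        · exact ha h
        · exact hb h
      neg_mem' := fun {a} ha => by
        simp only [Set.mem_setOf_eq, map_neg, Finsupp.support_neg]; exact ha } with hHdef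
  have hmemH : ∀ g, g ∈ H ↔ ((FreeAbelianGroup.toFinsupp g).support : Set ι) ⊆ T :=
    fun g => Iff.rfl
  -- the retraction
  set r : FreeAbelianGroup ι →+ FreeAbelianGroup ι :=
    FreeAbelianGroup.lift (fun i => if i ∈ T then FreeAbelianGroup.of i else 0) with hr
  have hofT : ∀ i ∈ T, FreeAbelianGroup.of i ∈ H := by
    intro i hi
    rw [hmemH, FreeAbelianGroup.toFinsupp_of]
    rw [Finsupp.support_single_ne_zero _ one_ne_zero]
    simpa using hi
  refine ⟨H, ?_, ?_, r, ?_, ?_⟩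
  · -- countability
    have : Countable T := hTc.to_subtype
    have hinj : Function.Injective
        (fun g : H => (FreeAbelianGroup.toFinsupp (g : FreeAbelianGroup ι)).subtypeDomain
          (· ∈ T)) := by
      intro a b hab
      have ha := (hmemH _).1 a.2
      have hb := (hmemH _).1 b.2
      apply Subtype.ext
      have : FreeAbelianGroup.toFinsupp (a : FreeAbelianGroup ι)
          = FreeAbelianGroup.toFinsupp (b : FreeAbelianGroup ι) := by
        ext i
        by_cases hi : i ∈ T
        · have := DFunLike.congr_fun hab ⟨i, hi⟩
          simpa [Finsupp.subtypeDomain_apply] using this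
        · rw [Finsupp.notMem_support_iff.1 (fun h => hi (ha h)),
            Finsupp.notMem_support_iff.1 (fun h => hi (hb h))]
      have := congrArg Finsupp.toFreeAbelianGroup this
      simpa using this
    exact hinj.countable
  · -- X ⊆ H
    intro x hx
    rw [SetLike.mem_coe, hmemH]
    rw [hT]
    exact Set.subset_biUnion_of_mem (u := fun x => ((FreeAbelianGroup.toFinsupp x).support : Set ι)) hx
  · -- range ⊆ H
    intro g
    induction g using FreeAbelianGroup.induction_on with
    | zero => rw [map_zero]; exact H.zero_mem
    | of i =>
        rw [hr, FreeAbelianGroup.lift_apply_of]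
        split
        · exact hofT i (by assumption)
        · exact H.zero_mem
    | neg i hi => rw [map_neg]; exact H.neg_mem hi
    | add a b ha hb => rw [map_add]; exact H.add_mem ha hb
  · -- fixes H
    have key : ∀ f : ι →₀ ℤ, (f.support : Set ι) ⊆ T →
        r (Finsupp.toFreeAbelianGroup f) = Finsupp.toFreeAbelianGroup f := by
      intro f
      induction f using Finsupp.induction with
      | zero => intro _; rw [map_zero, map_zero]
      | single_add a b f haf hb ih =>
          intro hsupp
          have hsup : (Finsupp.single a b + f).support = {a} ∪ f.support := by
            rw [Finsupp.support_add_eq, Finsupp.support_single_ne_zero a hb]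
            rw [Finsupp.support_single_ne_zero a hb]
            simpa [Finset.disjoint_singleton_left] using haf
          rw [hsup] at hsupp
          push_cast at hsupp
          rw [Set.union_subset_iff] at hsupp
          have haT : a ∈ T := Set.singleton_subset_iff.1 hsupp.1
          have hsingle : Finsupp.toFreeAbelianGroup (Finsupp.single a b)
              = b • FreeAbelianGroup.of a := by
            simp [Finsupp.toFreeAbelianGroup, Finsupp.liftAddHom_apply_single]
          rw [map_add, map_add, hsingle, map_zsmul, hr, FreeAbelianGroup.lift_apply_of, if_pos haT,
            ih hsupp.2]
    intro h hh
    have := key (FreeAbelianGroup.toFinsupp h) ((hmemH h).1 hh)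
    rwa [Finsupp.toFreeAbelianGroup_toFinsupp] at this
end

section
/- For every strictly increasing sequence j : ℕ → ℕ, the set of ν ∈ ℕ → ℕ that obey j is comeager (residual) in the Baire space ℕ → ℕ with the product topology. -/
/-- For every strictly increasing `j : ℕ → ℕ`, the set of `ν : ℕ → ℕ` obeying `j` is
comeager (residual) in Baire space. -/
theorem obeys_residual (j : ℕ → ℕ) (hj : StrictMono j) :
    {ν : ℕ → ℕ | Obeys ν j} ∈ residual (ℕ → ℕ) := by
  have key : {ν : ℕ → ℕ | Obeys ν j} =
      ⋂ p : ℕ × ℕ, {ν : ℕ → ℕ | ∃ i0 i1 : ℕ, p.2 < i0 ∧ p.1 < i1 ∧ i0 < i1 ∧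
        (∀ t, j i0 ≤ t → t ≤ j i1 → ν t = 0) ∧
        (∑ i ∈ Finset.Icc p.1 (j i0), (1 + ν i)) < i1 - i0} := by
    ext ν
    simp only [Set.mem_setOf_eq, Set.mem_iInter, Obeys]
    exact ⟨fun h p => h p.1 p.2, fun h n m => h (n, m)⟩
  rw [key]
  refine countable_iInter_mem.2 fun p => ?_
  obtain ⟨n, m⟩ := p
  apply residual_of_dense_open
  · -- openness
    have : {ν : ℕ → ℕ | ∃ i0 i1 : ℕ, m < i0 ∧ n < i1 ∧ i0 < i1 ∧
        (∀ t, j i0 ≤ t → t ≤ j i1 → ν t = 0) ∧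
        (∑ i ∈ Finset.Icc n (j i0), (1 + ν i)) < i1 - i0} =
        ⋃ i0 : ℕ, ⋃ i1 : ℕ, {ν : ℕ → ℕ | m < i0 ∧ n < i1 ∧ i0 < i1 ∧
        (∀ t, j i0 ≤ t → t ≤ j i1 → ν t = 0) ∧
        (∑ i ∈ Finset.Icc n (j i0), (1 + ν i)) < i1 - i0} := by
      ext ν; simp only [Set.mem_setOf_eq, Set.mem_iUnion]
    rw [this]
    refine isOpen_iUnion fun i0 => isOpen_iUnion fun i1 => ?_
    by_cases hP : m < i0 ∧ n < i1 ∧ i0 < i1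
    · obtain ⟨h1, h2, h3⟩ := hP
      have heq : {ν : ℕ → ℕ | m < i0 ∧ n < i1 ∧ i0 < i1 ∧
          (∀ t, j i0 ≤ t → t ≤ j i1 → ν t = 0) ∧
          (∑ i ∈ Finset.Icc n (j i0), (1 + ν i)) < i1 - i0} =
          {ν : ℕ → ℕ | ∀ t, j i0 ≤ t → t ≤ j i1 → ν t = 0} ∩
          {ν : ℕ → ℕ | (∑ i ∈ Finset.Icc n (j i0), (1 + ν i)) < i1 - i0} := by
        ext ν; simp [h1, h2, h3, Set.mem_setOf_eq]
      rw [heq]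
      refine IsOpen.inter ?_ ?_
      · have heq2 : {ν : ℕ → ℕ | ∀ t, j i0 ≤ t → t ≤ j i1 → ν t = 0} =
            ⋂ t ∈ Finset.Icc (j i0) (j i1), {ν : ℕ → ℕ | ν t = 0} := by
          ext ν
          simp only [Set.mem_setOf_eq, Set.mem_iInter, Finset.mem_Icc, and_imp]
        rw [heq2]
        exact isOpen_biInter_finset fun t _ =>
          (continuous_apply t).isOpen_preimage {0} (isOpen_discrete _)
      · have hc : Continuous fun ν : ℕ → ℕ => ∑ i ∈ Finset.Icc n (j i0), (1 + ν i) :=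
          continuous_finset_sum _ fun i _ => continuous_const.add (continuous_apply i)
        exact hc.isOpen_preimage {x | x < i1 - i0} (isOpen_discrete _)
    · have heq : {ν : ℕ → ℕ | m < i0 ∧ n < i1 ∧ i0 < i1 ∧
          (∀ t, j i0 ≤ t → t ≤ j i1 → ν t = 0) ∧
          (∑ i ∈ Finset.Icc n (j i0), (1 + ν i)) < i1 - i0} = ∅ := by
        ext ν; simp only [Set.mem_setOf_eq, Set.mem_empty_iff_false, iff_false]
        intro h; exact hP ⟨h.1, h.2.1, h.2.2.1⟩
      rw [heq]; exact isOpen_empty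
  · -- density
    rw [dense_iff_inter_open]
    intro U hU hUne
    obtain ⟨ν₀, hν₀⟩ := hUne
    obtain ⟨I, u, hu, hsub⟩ := isOpen_pi_iff.1 hU ν₀ hν₀
    obtain ⟨N, hN⟩ : ∃ N, ∀ i ∈ I, i < N :=
      ⟨I.sup id + 1, fun i hi => Nat.lt_succ_of_le (Finset.le_sup (f := id) hi)⟩
    set i0 : ℕ := max (m + 1) N with hi0def
    have hmi0 : m < i0 := lt_of_lt_of_le (Nat.lt_succ_self m) (le_max_left _ _)
    have hNi0 : N ≤ i0 := le_max_right _ _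
    have hi0j : i0 ≤ j i0 := hj.le_apply
    set ν' : ℕ → ℕ := fun t => if t < j i0 then ν₀ t else 0 with hν'def
    have hν'U : ν' ∈ U := by
      apply hsub
      intro i hi
      have : i < j i0 := lt_of_lt_of_le (lt_of_lt_of_le (hN i hi) hNi0) hi0j
      simpa [hν'def, this] using (hu i hi).2
    set S : ℕ := ∑ i ∈ Finset.Icc n (j i0), (1 + ν' i) with hSdef
    refine ⟨ν', hν'U, ?_⟩
    refine ⟨i0, i0 + S + n + 1, hmi0, by omega, by omega, ?_, ?_⟩
    · intro t ht _
      simp [hν'def, Nat.not_lt.2 ht]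
    · have : i0 + S + n + 1 - i0 = S + n + 1 := by omega
      rw [this]
      have hS : (∑ i ∈ Finset.Icc (n, m).1 (j i0), (1 + ν' i)) = S := rfl
      omega
end

section
/- Let G be an uncountable subgroup of Equiv.Perm ℕ. Then there exists a sequence d : ℕ → Equiv.Perm ℕ with d(n) ∈ G and d(n) ≠ 1 for all n, converging pointwise to the identity: for every m there is N such that d(n)(m) = m and d(n)⁻¹(m) = m for all n ≥ N. -/
/-- Any uncountable subgroup of `Equiv.Perm ℕ` contains a sequence of nonidentity
elements converging pointwise to the identity. -/
theorem exists_seq_tendsto_one_of_uncountable (G : Subgroup (Equiv.Perm ℕ))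
    (hunc : ¬ Countable G) :
    ∃ d : ℕ → Equiv.Perm ℕ, (∀ n, d n ∈ G) ∧ (∀ n, d n ≠ 1) ∧
      ∀ m : ℕ, ∃ N : ℕ, ∀ n ≥ N, d n m = m ∧ (d n)⁻¹ m = m := by
  have key : ∀ n : ℕ, ∃ h : Equiv.Perm ℕ, h ∈ G ∧ h ≠ 1 ∧ ∀ i ≤ n, h i = i ∧ h⁻¹ i = i := by
    intro n
    have hni : ¬ Function.Injective
        (fun g : G => fun i : Fin (n+1) => (g : Equiv.Perm ℕ) i) := by
      intro hinj
      exact hunc hinj.countable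
    rw [Function.not_injective_iff] at hni
    obtain ⟨a, b, hfab, hab⟩ := hni
    refine ⟨(↑b)⁻¹ * ↑a, mul_mem (inv_mem b.2) a.2, ?_, ?_⟩
    · intro h
      apply hab
      exact Subtype.ext (inv_mul_eq_one.mp h).symm
    · intro i hi
      have hval : (a : Equiv.Perm ℕ) i = (b : Equiv.Perm ℕ) i := by
        have := congrFun hfab ⟨i, Nat.lt_succ_of_le hi⟩
        simpa using this
      constructor
      · simp [Equiv.Perm.mul_apply, hval]
      · rw [mul_inv_rev, inv_inv]
        simp [Equiv.Perm.mul_apply, ← hval]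
  choose h hmem hne hfix using key
  refine ⟨h, hmem, hne, fun m => ⟨m, fun n hn => hfix n m hn⟩⟩
end
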